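/- The language of a skip-free GKAT expression satisfies the inductive characterization: L(0) = ∅; L(p) = {αp : α ∈ At}; L(e₁ +_b e₂) = bL(e₁) ∪ b̄L(e₂); L(e₁·e₂) = L(e₁)·L(e₂); L(e₁^(b)e₂) = ⋃_{n∈ℕ} (bL(e₁))ⁿ · b̄L(e₂). -/

import Mathlib

variable {At : Type} {Act : Type} {X : Type} {Y : Type} {Z : Type}

/-- Skip-free GKAT expressions; tests are represented as Boolean predicates on atoms. -/
inductive GExp (At Act : Type) : Type
  | zero : GExp At Act
  | act : Act → GExp At Act
  | add : (At → Bool) → GExp At Act → GExp At Act → GExp At Act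
  | seq : GExp At Act → GExp At Act → GExp At Act
  | loop : (At → Bool) → GExp At Act → GExp At Act → GExp At Act

/-- The Brzozowski-style small-step semantics (derivative) of skip-free GKAT expressions.
`none` is the failure output ⊥, `some (p, none)` is acceptance with action `p`,
and `some (p, some e')` is a transition to `e'` with action `p`. -/
def gderiv : GExp At Act → At → Option (Act × Option (GExp At Act))
  | .zero, _ => none
  | .act p, _ => some (p, none)
  | .add b e f, α => if b α then gderiv e α else gderiv f α
  | .seq e f, α =>
      match gderiv e α with
      | none => none
      | some (p, none) => some (p, some f)
      | some (p, some e') => some (p, some (.seq e' f))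
  | .loop b e f, α =>
      if b α then
        match gderiv e α with
        | none => none
        | some (p, none) => some (p, some (.loop b e f))
        | some (p, some e') => some (p, some (.seq e' (.loop b e f)))
      else gderiv f α

/-- A skip-free automaton structure on `X`. -/
abbrev SFA (At Act X : Type) := X → At → Option (Act × Option X)

/-- Acceptance of a guarded trace (a nonempty list of atom/action pairs) from a state. -/
inductive Accepts (h : SFA At Act X) : X → List (At × Act) → Prop
  | last {x α p} : h x α = some (p, none) → Accepts h x [(α, p)]
  | step {x α p x' w} : h x α = some (p, some x') → Accepts h x' w →
      Accepts h x ((α, p) :: w)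

/-- The language of guarded traces accepted by a state of a skip-free automaton. -/
def Lang (h : SFA At Act X) (x : X) : Set (List (At × Act)) := {w | Accepts h x w}

/-- Bisimulations between skip-free automata. -/
def IsSFBisim (h : SFA At Act X) (k : SFA At Act Y) (R : X → Y → Prop) : Prop :=
  ∀ ⦃x y⦄, R x y → ∀ α : At,
    (h x α = none ↔ k y α = none) ∧
    (∀ p : Act, h x α = some (p, none) ↔ k y α = some (p, none)) ∧
    (∀ (p : Act) (x' : X), h x α = some (p, some x') →
      ∃ y' : Y, k y α = some (p, some y') ∧ R x' y')

/-- Bisimilarity of states of skip-free automata. -/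
def SFBisimilar (h : SFA At Act X) (k : SFA At Act Y) (x : X) (y : Y) : Prop :=
  ∃ R, IsSFBisim h k R ∧ R x y

/-- Restriction `b·L` of a trace language to traces starting with an atom satisfying `b`. -/
def guardL (b : At → Bool) (L : Set (List (At × Act))) : Set (List (At × Act)) :=
  {w | w ∈ L ∧ ∃ (α : At) (p : Act) (t : List (At × Act)), w = (α, p) :: t ∧ b α = true}

/-- Elementwise concatenation of trace languages. -/
def catL (L K : Set (List (At × Act))) : Set (List (At × Act)) :=
  {w | ∃ u v, u ∈ L ∧ v ∈ K ∧ w = u ++ v}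

/-- Iterated concatenation: `L⁰ = {ε}`, `Lⁿ⁺¹ = L·Lⁿ`. -/
def powL (L : Set (List (At × Act))) : ℕ → Set (List (At × Act))
  | 0 => {[]}
  | n + 1 => catL L (powL L n)

/-!
The derivative of `e₁ · e₂` is that of `e₁` with termination redirected to `e₂`, so its traces
are those of `e₁` followed by those of `e₂`. At atoms satisfying `b`, the loop `e₁^(b) e₂` has
the derivative of `e₁ · (e₁^(b) e₂)`, and elsewhere that of `e₂`; hence its language solves
`S = bL(e₁) · S ∪ b̄L(e₂)`. Since `bL(e₁)` contains no empty trace, Arden's rule identifies the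
solution as `⋃ₙ (bL(e₁))ⁿ · b̄L(e₂)`. The remaining cases are read off the derivative directly.
-/

section Automaton

variable {h : SFA At Act X}

@[simp]
theorem mem_lang {x : X} {w : List (At × Act)} : w ∈ Lang h x ↔ Accepts h x w := Iff.rfl

theorem Accepts.ne_nil {x : X} {w : List (At × Act)} (hw : Accepts h x w) : w ≠ [] := by
  cases hw <;> simp

@[simp]
theorem not_accepts_nil {x : X} : ¬ Accepts h x [] := fun hw => hw.ne_nil rfl

theorem nil_not_mem_lang {x : X} : [] ∉ Lang h x := not_accepts_nil

theorem accepts_cons_iff {x : X} {α : At} {p : Act} {w : List (At × Act)} :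
    Accepts h x ((α, p) :: w) ↔
      (w = [] ∧ h x α = some (p, none)) ∨ ∃ x', h x α = some (p, some x') ∧ Accepts h x' w := by
  constructor
  · rintro (⟨hx⟩ | ⟨hx, hw⟩)
    exacts [.inl ⟨rfl, hx⟩, .inr ⟨_, hx, hw⟩]
  · rintro (⟨rfl, hx⟩ | ⟨x', hx, hw⟩)
    exacts [.last hx, .step hx hw]

theorem accepts_cons_congr {x y : X} {α : At} (hxy : h x α = h y α) {p : Act}
    {w : List (At × Act)} : Accepts h x ((α, p) :: w) ↔ Accepts h y ((α, p) :: w) := by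
  rw [accepts_cons_iff, accepts_cons_iff, hxy]

theorem lang_eq_guardL_union {x y z : X} (b : At → Bool)
    (hz : ∀ α, h z α = if b α then h x α else h y α) :
    Lang h z = guardL b (Lang h x) ∪ guardL (fun α => !b α) (Lang h y) := by
  ext (_ | ⟨⟨α, p⟩, w⟩)
  · simp [guardL]
  · have hzα := hz α
    cases hb : b α <;> simp only [hb] at hzα <;> simp [guardL, hb, accepts_cons_congr hzα]

theorem exists_accepts_append_eq_cons {x : X} {P : List (At × Act) → Prop} {a : At × Act}
    {w : List (At × Act)} :
    (∃ u v, Accepts h x u ∧ P v ∧ a :: w = u ++ v) ↔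
      ∃ u v, Accepts h x (a :: u) ∧ P v ∧ w = u ++ v := by
  constructor
  · rintro ⟨_ | ⟨b, u⟩, v, hu, hv, huv⟩
    · exact absurd hu not_accepts_nil
    · obtain ⟨rfl, rfl⟩ := List.cons_eq_cons.mp huv
      exact ⟨u, v, hu, hv, rfl⟩
  · rintro ⟨u, v, hu, hv, rfl⟩
    exact ⟨a :: u, v, hu, hv, rfl⟩

/-- If `c x` behaves like `x` except that termination of `x` is replaced by a jump to `y₀`,
then `c x` accepts the traces of `x` followed by those of `y₀`. -/
theorem accepts_iff_exists_append {k : SFA At Act Y} (c : X → Y) (y₀ : Y)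
    (hc : ∀ x α, k (c x) α = (h x α).map fun r => (r.1, some (r.2.elim y₀ c)))
    {x : X} {w : List (At × Act)} :
    Accepts k (c x) w ↔ ∃ u v, Accepts h x u ∧ Accepts k y₀ v ∧ w = u ++ v := by
  induction w generalizing x with
  | nil => simp
  | cons a w ih =>
    obtain ⟨α, p⟩ := a
    rw [exists_accepts_append_eq_cons, accepts_cons_iff, hc]
    simp only [accepts_cons_iff]
    rcases h x α with _ | ⟨q, _ | x'⟩ <;> simp [ih, and_assoc]

end Automaton

section Languages

variable {L K M : Set (List (At × Act))}

theorem catL_assoc : catL (catL L K) M = catL L (catL K M) := by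
  ext w
  simp only [catL, Set.mem_ofPred_eq]
  constructor
  · rintro ⟨_, z, ⟨x, y, hx, hy, rfl⟩, hz, rfl⟩
    exact ⟨x, y ++ z, hx, ⟨y, z, hy, hz, rfl⟩, List.append_assoc x y z⟩
  · rintro ⟨x, _, hx, ⟨y, z, hy, hz, rfl⟩, rfl⟩
    exact ⟨x ++ y, z, ⟨x, y, hx, hy, rfl⟩, hz, (List.append_assoc x y z).symm⟩

theorem catL_powL_zero : catL (powL L 0) K = K := by
  ext w
  simp [catL, powL]

theorem catL_powL_succ (n : ℕ) : catL (powL L (n + 1)) K = catL L (catL (powL L n) K) :=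
  catL_assoc

theorem guardL_catL (b : At → Bool) (hL : [] ∉ L) : guardL b (catL L K) = catL (guardL b L) K := by
  ext w
  simp only [guardL, catL, Set.mem_ofPred_eq]
  constructor
  · rintro ⟨⟨_ | ⟨a, u⟩, v, hu, hv, rfl⟩, α, p, t, hw, hα⟩
    · exact absurd hu hL
    · obtain ⟨rfl, -⟩ := List.cons_eq_cons.mp hw
      exact ⟨_, v, ⟨hu, α, p, u, rfl, hα⟩, hv, rfl⟩
  · rintro ⟨u, v, ⟨hu, α, p, t, rfl, hα⟩, hv, rfl⟩
    exact ⟨⟨_, v, hu, hv, rfl⟩, α, p, t ++ v, rfl, hα⟩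

/-- Arden's rule. -/
theorem eq_iUnion_catL_powL_of_eq {S : Set (List (At × Act))} (hL : [] ∉ L)
    (hS : S = catL L S ∪ K) : S = ⋃ n, catL (powL L n) K := by
  refine subset_antisymm (fun w hw => ?_) (Set.iUnion_subset fun n => ?_)
  · induction hlen : w.length using Nat.strong_induction_on generalizing w with
    | _ m ih =>
      rw [hS] at hw
      rcases hw with ⟨u, v, hu, hv, rfl⟩ | hw
      · have hu_ne : u ≠ [] := fun h => hL (h ▸ hu)
        obtain ⟨n, hn⟩ := Set.mem_iUnion.mp
          (ih v.length (by simp [← hlen, List.length_pos_iff.mpr hu_ne]) v hv rfl)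
        exact Set.mem_iUnion.mpr ⟨n + 1, by rw [catL_powL_succ]; exact ⟨u, v, hu, hn, rfl⟩⟩
      · exact Set.mem_iUnion.mpr ⟨0, by rwa [catL_powL_zero]⟩
  · induction n with
    | zero => rw [catL_powL_zero, hS]; exact Set.subset_union_right
    | succ n ih =>
      rw [catL_powL_succ, hS]
      rintro _ ⟨u, v, hu, hv, rfl⟩
      exact .inl ⟨u, v, hu, ih hv, rfl⟩

end Languages

section GKAT

variable {b : At → Bool} {e f : GExp At Act}

theorem gderiv_add (α : At) :
    gderiv (.add b e f) α = if b α then gderiv e α else gderiv f α := rfl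

theorem gderiv_seq (α : At) :
    gderiv (.seq e f) α = (gderiv e α).map fun r => (r.1, some (r.2.elim f (.seq · f))) := by
  rcases h : gderiv e α with _ | ⟨p, _ | e'⟩ <;> simp [gderiv, h]

theorem gderiv_loop (α : At) :
    gderiv (.loop b e f) α = if b α then gderiv (.seq e (.loop b e f)) α else gderiv f α := rfl

theorem lang_zero : Lang gderiv (.zero : GExp At Act) = ∅ := by
  ext (_ | ⟨⟨α, p⟩, w⟩) <;> simp [accepts_cons_iff, gderiv]

theorem lang_act (p : Act) : Lang (gderiv (At := At)) (.act p) = {w | ∃ α : At, w = [(α, p)]} := by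
  ext (_ | ⟨⟨α, q⟩, w⟩)
  · simp
  · simp [accepts_cons_iff, gderiv, eq_comm, and_comm]

theorem lang_add :
    Lang gderiv (.add b e f) = guardL b (Lang gderiv e) ∪ guardL (fun α => !b α) (Lang gderiv f) :=
  lang_eq_guardL_union b gderiv_add

theorem lang_seq : Lang gderiv (.seq e f) = catL (Lang gderiv e) (Lang gderiv f) := by
  ext w
  exact accepts_iff_exists_append (.seq · f) f fun _ => gderiv_seq

theorem lang_loop_unfold :
    Lang gderiv (.loop b e f) =
      catL (guardL b (Lang gderiv e)) (Lang gderiv (.loop b e f)) ∪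
        guardL (fun α => !b α) (Lang gderiv f) := by
  conv_lhs => rw [lang_eq_guardL_union b gderiv_loop, lang_seq, guardL_catL b nil_not_mem_lang]

theorem lang_loop :
    Lang gderiv (.loop b e f) =
      ⋃ n : ℕ, catL (powL (guardL b (Lang gderiv e)) n) (guardL (fun α => !b α) (Lang gderiv f)) :=
  eq_iUnion_catL_powL_of_eq (fun h => nil_not_mem_lang h.1) lang_loop_unfold

end GKAT

theorem lang_characterization :
    (Lang (gderiv (At := At) (Act := Act)) .zero = ∅) ∧
    (∀ p : Act, Lang (gderiv (At := At)) (.act p) =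
      {w | ∃ α : At, w = [(α, p)]}) ∧
    (∀ (b : At → Bool) (e₁ e₂ : GExp At Act),
      Lang gderiv (.add b e₁ e₂) =
        guardL b (Lang gderiv e₁) ∪ guardL (fun α => !b α) (Lang gderiv e₂)) ∧
    (∀ e₁ e₂ : GExp At Act,
      Lang gderiv (.seq e₁ e₂) = catL (Lang gderiv e₁) (Lang gderiv e₂)) ∧
    (∀ (b : At → Bool) (e₁ e₂ : GExp At Act),
      Lang gderiv (.loop b e₁ e₂) =
        ⋃ n : ℕ, catL (powL (guardL b (Lang gderiv e₁)) n)
          (guardL (fun α => !b α) (Lang gderiv e₂))) :=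
  ⟨lang_zero, lang_act, fun _ _ _ => lang_add, fun _ _ => lang_seq, fun _ _ _ => lang_loop⟩
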